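/- Let X ⊆ M_{d_B×d_E}(ℂ) be a TRO and let f ∈ M_{d_E}(ℂ) be a normalized density (f positive semidefinite with τ(f) = 1, where τ = tr/d_E) that is independent of the right algebra R(X), i.e. τ(f y) = τ(f) τ(y) for all y ∈ R(X). Then the linear map V_f : X → ℂ^{d_B} ⊗ ℂ^{d_E} sending the vector |x⟩ (x ∈ X, with the Hilbert–Schmidt inner product on X) to the vector corresponding to the matrix x·√f is an isometry; consequently the map N_f : B(X) → M_{d_B}(ℂ) determined by N_f(|x⟩⟨y|) = x f y* equals tr_E(V_f · V_f*) composed with the input, and is a completely positive trace-preserving map (a quantum channel). -/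

import Mathlib

open scoped BigOperators ComplexOrder Kronecker ENNReal
open Matrix

noncomputable section

namespace TROPaper

/-- The Hilbert–Schmidt inner product `⟨x, y⟩ = tr(xᴴ y)` on matrices. -/
def hsInner {I J : Type*} [Fintype I] [Fintype J] (x y : Matrix I J ℂ) : ℂ :=
  (xᴴ * y).trace

/-- The rank-one operator `|x⟩⟨y|` on a subspace `X` of matrices, with respect to the
Hilbert–Schmidt inner product: `z ↦ ⟨y, z⟩ • x`. -/
def rankOne {I J : Type*} [Fintype I] [Fintype J] (X : Submodule ℂ (Matrix I J ℂ))
    (x y : X) : X →ₗ[ℂ] X where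
  toFun z := hsInner (y : Matrix I J ℂ) (z : Matrix I J ℂ) • x
  map_add' z w := by
    simp only [Submodule.coe_add, hsInner]
    rw [Matrix.mul_add, Matrix.trace_add, add_smul]
  map_smul' c z := by
    simp only [Submodule.coe_smul, hsInner, RingHom.id_apply]
    rw [Matrix.mul_smul, Matrix.trace_smul, smul_eq_mul, ← smul_smul]

/-- A ternary ring of operators: a subspace closed under `x yᴴ z`. -/
def IsTRO {I J : Type*} [Fintype I] [Fintype J] (X : Submodule ℂ (Matrix I J ℂ)) : Prop :=
  ∀ x ∈ X, ∀ y ∈ X, ∀ z ∈ X, x * yᴴ * z ∈ X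

/-- The left algebra `L(X) = span{x yᴴ : x, y ∈ X}`. -/
def leftAlg {I J : Type*} [Fintype I] [Fintype J] (X : Submodule ℂ (Matrix I J ℂ)) :
    Submodule ℂ (Matrix I I ℂ) :=
  Submodule.span ℂ {a | ∃ x ∈ X, ∃ y ∈ X, a = x * yᴴ}

/-- The right algebra `R(X) = span{xᴴ y : x, y ∈ X}`. -/
def rightAlg {I J : Type*} [Fintype I] [Fintype J] (X : Submodule ℂ (Matrix I J ℂ)) :
    Submodule ℂ (Matrix J J ℂ) :=
  Submodule.span ℂ {a | ∃ x ∈ X, ∃ y ∈ X, a = xᴴ * y}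

/-- The normalized trace `τ = tr / dim`. -/
def ntrace {J : Type*} [Fintype J] (f : Matrix J J ℂ) : ℂ :=
  f.trace / (Fintype.card J : ℂ)

/-- A symbol for a TRO `X`: a normalized density strongly independent of the
right algebra `R(X)`. -/
def IsSymbolTRO {I J : Type*} [Fintype I] [Fintype J] [DecidableEq J]
    (X : Submodule ℂ (Matrix I J ℂ)) (f : Matrix J J ℂ) : Prop :=
  f.PosSemidef ∧ ntrace f = 1 ∧
    ∀ (n : ℕ), ∀ y ∈ rightAlg X, ntrace (f ^ n * y) = ntrace (f ^ n) * ntrace y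

/-- Singular values of a square matrix: square roots of eigenvalues of `aᴴ a`. -/
def singularValues {I : Type*} [Fintype I] [DecidableEq I] (a : Matrix I I ℂ) : I → ℝ :=
  fun i => Real.sqrt ((Matrix.posSemidef_conjTranspose_mul_self a).1.eigenvalues i)

/-- The Schatten `p`-norm `(tr |a|^p)^(1/p)` (operator norm for `p = ∞`). -/
def schattenNorm {I : Type*} [Fintype I] [DecidableEq I] (p : ℝ≥0∞) (a : Matrix I I ℂ) : ℝ :=
  if p = ∞ then ⨆ i, singularValues a i
  else (∑ i, singularValues a i ^ p.toReal) ^ (1 / p.toReal)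

/-- The `L_p`-norm `(τ(|f|^p))^(1/p)` with respect to the normalized trace `τ = tr/dim`. -/
def schattenNormTau {J : Type*} [Fintype J] [DecidableEq J] (p : ℝ≥0∞) (f : Matrix J J ℂ) : ℝ :=
  if p = ∞ then ⨆ i, singularValues f i
  else ((∑ i, singularValues f i ^ p.toReal) / (Fintype.card J : ℝ)) ^ (1 / p.toReal)

/-- Real power of a hermitian matrix via the spectral decomposition; for negative exponents
this is the power of the inverse on the support (since `0 ^ r = 0` for `r ≠ 0`).
Junk value `0` for non-hermitian input. -/
def herPow {I : Type*} [Fintype I] [DecidableEq I] (σ : Matrix I I ℂ) (r : ℝ) :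
    Matrix I I ℂ :=
  if h : σ.IsHermitian then
    (h.eigenvectorUnitary : Matrix I I ℂ) *
      Matrix.diagonal (fun i => ((h.eigenvalues i ^ r : ℝ) : ℂ)) *
      (star (h.eigenvectorUnitary : Matrix I I ℂ))
  else 0

/-- The conjugate exponent `p' = (1 - 1/p)⁻¹` of `p`, as a real number. -/
def econj (p : ℝ≥0∞) : ℝ := ((1 - p⁻¹)⁻¹ : ℝ≥0∞).toReal

/-- Partial trace over the right (second) tensor factor. -/
def trRight {A B : Type*} [Fintype A] [Fintype B] :
    Matrix (A × B) (A × B) ℂ →ₗ[ℂ] Matrix A A ℂ where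
  toFun M := Matrix.of fun a a' => ∑ b, M (a, b) (a', b)
  map_add' M N := by
    funext a a'
    simp [Finset.sum_add_distrib]
  map_smul' c M := by
    funext a a'
    simp [Finset.mul_sum]

/-- Partial trace over the left (first) tensor factor. -/
def trLeft {A B : Type*} [Fintype A] [Fintype B] :
    Matrix (A × B) (A × B) ℂ →ₗ[ℂ] Matrix B B ℂ where
  toFun M := Matrix.of fun b b' => ∑ a, M (a, b) (a, b')
  map_add' M N := by
    funext b b'
    simp [Finset.sum_add_distrib]
  map_smul' c M := by
    funext b b'
    simp [Finset.mul_sum]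

/-- Conjugation `ρ ↦ V ρ Vᴴ`. -/
def dilate {A P : Type*} [Fintype A] [Fintype P] (V : Matrix P A ℂ) :
    Matrix A A ℂ →ₗ[ℂ] Matrix P P ℂ where
  toFun ρ := V * ρ * Vᴴ
  map_add' ρ σ := by simp [Matrix.mul_add, Matrix.add_mul]
  map_smul' c ρ := by simp [Matrix.mul_smul, Matrix.smul_mul]

/-- The modified channel `N_f(ρ) = tr_E((1 ⊗ f) V ρ Vᴴ)` associated to a Stinespring
isometry `V : ℂ^A → ℂ^B ⊗ ℂ^E` and an operator `f` on the environment `E`; it satisfies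
`N_f(|h⟩⟨k|) = h f kᴴ` on the matrices `h, k` corresponding to `V|h⟩, V|k⟩`.
For `f = 1` this is the channel `N(ρ) = tr_E(V ρ Vᴴ)` itself. -/
def modChannel {A B E : Type*} [Fintype A] [Fintype B] [Fintype E] [DecidableEq B]
    (V : Matrix (B × E) A ℂ) (f : Matrix E E ℂ) :
    Matrix A A ℂ →ₗ[ℂ] Matrix B B ℂ :=
  trRight ∘ₗ LinearMap.mulLeft ℂ ((1 : Matrix B B ℂ) ⊗ₖ fᵀ) ∘ₗ dilate V

/-- The matrix in `M_{B×E}` corresponding to the vector `V|h⟩ ∈ ℂ^B ⊗ ℂ^E`. -/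
def toMat {A B E : Type*} [Fintype A] [Fintype B] [Fintype E] (V : Matrix (B × E) A ℂ) :
    (A → ℂ) →ₗ[ℂ] Matrix B E ℂ where
  toFun h := Matrix.of fun b e => V.mulVec h (b, e)
  map_add' h k := by
    funext b e
    simp [Matrix.mulVec_add]
  map_smul' c h := by
    funext b e
    simp [Matrix.mulVec_smul]

/-- The Stinespring space of `V`: the matrices corresponding to vectors in the range of `V`. -/
def stinespringSpace {A B E : Type*} [Fintype A] [Fintype B] [Fintype E]
    (V : Matrix (B × E) A ℂ) : Submodule ℂ (Matrix B E ℂ) :=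
  LinearMap.range (toMat V)

/-- A symbol of the channel with Stinespring isometry `V`: a normalized density `f` on the
environment that is strongly independent of the right algebra of some TRO containing the
Stinespring space. -/
def IsSymbol {A B E : Type*} [Fintype A] [Fintype B] [Fintype E] [DecidableEq E]
    (V : Matrix (B × E) A ℂ) (f : Matrix E E ℂ) : Prop :=
  f.PosSemidef ∧ ntrace f = 1 ∧
    ∃ X : Submodule ℂ (Matrix B E ℂ), IsTRO X ∧ stinespringSpace V ≤ X ∧
      ∀ (n : ℕ), ∀ y ∈ rightAlg X, ntrace (f ^ n * y) = ntrace (f ^ n) * ntrace y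

/-- Ampliation `id_C ⊗ Φ` of a linear map on matrix algebras. -/
def ampl (C : Type*) {A B : Type*} [Fintype C] [Fintype A] [Fintype B]
    (Φ : Matrix A A ℂ →ₗ[ℂ] Matrix B B ℂ) :
    Matrix (C × A) (C × A) ℂ →ₗ[ℂ] Matrix (C × B) (C × B) ℂ where
  toFun ρ := Matrix.of fun p q => Φ (Matrix.of fun a a' => ρ (p.1, a) (q.1, a')) p.2 q.2
  map_add' ρ σ := by
    funext p q
    have h : (Matrix.of fun a a' => (ρ + σ) (p.1, a) (q.1, a')) =
        (Matrix.of fun a a' => ρ (p.1, a) (q.1, a')) +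
          (Matrix.of fun a a' => σ (p.1, a) (q.1, a')) := rfl
    show Φ _ p.2 q.2 = _
    rw [h, map_add]
    rfl
  map_smul' c ρ := by
    funext p q
    have h : (Matrix.of fun a a' => (c • ρ) (p.1, a) (q.1, a')) =
        c • (Matrix.of fun a a' => ρ (p.1, a) (q.1, a')) := rfl
    show Φ _ p.2 q.2 = _
    rw [h, LinearMap.map_smul]
    rfl

/-- A state: positive semidefinite with trace one. -/
def IsState {I : Type*} [Fintype I] (ρ : Matrix I I ℂ) : Prop :=
  ρ.PosSemidef ∧ ρ.trace = 1

/-- Complete positivity of a map between matrix algebras. -/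
def CompletelyPositive {A B : Type*} [Fintype A] [Fintype B]
    (Φ : Matrix A A ℂ →ₗ[ℂ] Matrix B B ℂ) : Prop :=
  ∀ (d : ℕ) (ρ : Matrix (Fin d × A) (Fin d × A) ℂ), ρ.PosSemidef → (ampl (Fin d) Φ ρ).PosSemidef

/-- Trace preservation. -/
def TracePreserving {A B : Type*} [Fintype A] [Fintype B]
    (Φ : Matrix A A ℂ →ₗ[ℂ] Matrix B B ℂ) : Prop :=
  ∀ ρ, (Φ ρ).trace = ρ.trace

/-- A quantum channel: a completely positive trace-preserving map. -/
def IsQuantumChannel {A B : Type*} [Fintype A] [Fintype B]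
    (Φ : Matrix A A ℂ →ₗ[ℂ] Matrix B B ℂ) : Prop :=
  CompletelyPositive Φ ∧ TracePreserving Φ

/-- The von Neumann entropy `H(ρ) = -tr(ρ log ρ)` (natural logarithm), computed through the
eigenvalues; junk value `0` for non-hermitian input. -/
def vnEntropy {I : Type*} [Fintype I] [DecidableEq I] (ρ : Matrix I I ℂ) : ℝ :=
  if h : ρ.IsHermitian then -∑ i, h.eigenvalues i * Real.log (h.eigenvalues i) else 0

/-- Coherent information of a bipartite state `ω` on `A ⊗ B`:
`I_c(A⟩B)_ω = H(ω^{AB}) - H(ω^B)`. -/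
def coherentInfo {A B : Type*} [Fintype A] [Fintype B] [DecidableEq A] [DecidableEq B]
    (ω : Matrix (A × B) (A × B) ℂ) : ℝ :=
  vnEntropy ω - vnEntropy (trLeft ω)

/-- Mutual information of a bipartite state `ω` on `A ⊗ B`:
`I(A:B)_ω = H(ω^A) + H(ω^B) - H(ω^{AB})`. -/
def mutualInfo {A B : Type*} [Fintype A] [Fintype B] [DecidableEq A] [DecidableEq B]
    (ω : Matrix (A × B) (A × B) ℂ) : ℝ :=
  vnEntropy (trRight ω) + vnEntropy (trLeft ω) - vnEntropy ω

/-- `τ(f log f)` with respect to the normalized trace `τ = tr/dim` (natural logarithm). -/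
def tauLog {J : Type*} [Fintype J] [DecidableEq J] (f : Matrix J J ℂ) : ℝ :=
  if h : f.IsHermitian then
    (∑ i, h.eigenvalues i * Real.log (h.eigenvalues i)) / (Fintype.card J : ℝ)
  else 0

/-- One-shot quantum capacity: the supremum of coherent informations of outputs of
`id_A ⊗ Φ` over all finite-dimensional ancillas `A` and bipartite input states. -/
def Q1 {A B : Type*} [Fintype A] [Fintype B] [DecidableEq B]
    (Φ : Matrix A A ℂ →ₗ[ℂ] Matrix B B ℂ) : ℝ :=
  sSup {r | ∃ (d : ℕ) (ρ : Matrix (Fin d × A) (Fin d × A) ℂ), IsState ρ ∧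
    r = coherentInfo (ampl (Fin d) Φ ρ)}

/-- The Holevo quantity `χ(Φ)`: the supremum over finite ensembles of
`H(Φ(Σ p_x ρ_x)) - Σ p_x H(Φ(ρ_x))`. -/
def holevoChi {A B : Type*} [Fintype A] [Fintype B] [DecidableEq B]
    (Φ : Matrix A A ℂ →ₗ[ℂ] Matrix B B ℂ) : ℝ :=
  sSup {r | ∃ (k : ℕ) (pr : Fin k → ℝ) (ρs : Fin k → Matrix A A ℂ),
    (∀ x, 0 ≤ pr x) ∧ (∑ x, pr x = 1) ∧ (∀ x, IsState (ρs x)) ∧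
    r = vnEntropy (Φ (∑ x, (pr x : ℂ) • ρs x)) - ∑ x, pr x * vnEntropy (Φ (ρs x))}

/-- Entanglement-assisted classical capacity: supremum of mutual informations of outputs. -/
def CEA {A B : Type*} [Fintype A] [Fintype B] [DecidableEq A] [DecidableEq B]
    (Φ : Matrix A A ℂ →ₗ[ℂ] Matrix B B ℂ) : ℝ :=
  sSup {r | ∃ (d : ℕ) (ρ : Matrix (Fin d × A) (Fin d × A) ℂ), IsState ρ ∧
    r = mutualInfo (ampl (Fin d) Φ ρ)}

/-- Tensor product `Φ ⊗ Ψ` of linear maps between matrix algebras. -/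
def tensorMap {A A' B B' : Type*} [Fintype A] [Fintype A'] [Fintype B] [Fintype B']
    [DecidableEq A] [DecidableEq A']
    (Φ : Matrix A A ℂ →ₗ[ℂ] Matrix B B ℂ) (Ψ : Matrix A' A' ℂ →ₗ[ℂ] Matrix B' B' ℂ) :
    Matrix (A × A') (A × A') ℂ →ₗ[ℂ] Matrix (B × B') (B × B') ℂ where
  toFun ρ := Matrix.of fun p q =>
    ∑ t : (A × A) × (A' × A'),
      ρ (t.1.1, t.2.1) (t.1.2, t.2.2) *
        (Φ (Matrix.single t.1.1 t.1.2 1) p.1 q.1 *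
          Ψ (Matrix.single t.2.1 t.2.2 1) p.2 q.2)
  map_add' ρ σ := by
    funext p q
    simp [Matrix.add_apply, add_mul, Finset.sum_add_distrib]
  map_smul' c ρ := by
    funext p q
    simp [Matrix.smul_apply, smul_eq_mul, Finset.mul_sum, mul_assoc]

/-- `k`-fold tensor power `Φ^{⊗k}` of a linear map between matrix algebras. -/
def tensorPow {A B : Type*} [Fintype A] [Fintype B] [DecidableEq A]
    (Φ : Matrix A A ℂ →ₗ[ℂ] Matrix B B ℂ) (k : ℕ) :
    Matrix (Fin k → A) (Fin k → A) ℂ →ₗ[ℂ] Matrix (Fin k → B) (Fin k → B) ℂ where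
  toFun ρ := Matrix.of fun p q =>
    ∑ t : (Fin k → A) × (Fin k → A),
      ρ t.1 t.2 * ∏ i, Φ (Matrix.single (t.1 i) (t.2 i) 1) (p i) (q i)
  map_add' ρ σ := by
    funext p q
    simp [Matrix.add_apply, add_mul, Finset.sum_add_distrib]
  map_smul' c ρ := by
    funext p q
    simp [Matrix.smul_apply, smul_eq_mul, Finset.mul_sum, mul_assoc]

/-- Quantum capacity `Q(Φ) = lim_k Q^{(1)}(Φ^{⊗k})/k`. -/
def qCap {A B : Type*} [Fintype A] [Fintype B] [DecidableEq A] [DecidableEq B]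
    (Φ : Matrix A A ℂ →ₗ[ℂ] Matrix B B ℂ) : ℝ :=
  Filter.limUnder Filter.atTop (fun k : ℕ => Q1 (tensorPow Φ k) / k)

/-- The norm `‖ω‖_{S_1(B, S_p(A))}`: the infimum over states `σ` on `B` of
`‖(1_A ⊗ σ^{-1/(2p')}) ω (1_A ⊗ σ^{-1/(2p')})‖_p`. -/
def S1SpNorm {A B : Type*} [Fintype A] [Fintype B] [DecidableEq A] [DecidableEq B]
    (p : ℝ≥0∞) (ω : Matrix (A × B) (A × B) ℂ) : ℝ :=
  sInf {r | ∃ σ : Matrix B B ℂ, IsState σ ∧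
    r = schattenNorm p
      (((1 : Matrix A A ℂ) ⊗ₖ herPow σ (-(1 / (2 * econj p)))) * ω *
        ((1 : Matrix A A ℂ) ⊗ₖ herPow σ (-(1 / (2 * econj p)))))}

/-- The sandwiched Rényi coherent information `I_{c,p}(A⟩B)_ω = p' log ‖ω‖_{S_1(B,S_p(A))}`. -/
def renyiCoherentInfo {A B : Type*} [Fintype A] [Fintype B] [DecidableEq A] [DecidableEq B]
    (p : ℝ≥0∞) (ω : Matrix (A × B) (A × B) ℂ) : ℝ :=
  econj p * Real.log (S1SpNorm p ω)

/-- Positivity of an operator on a subspace of matrices with the HS inner product. -/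
def IsPosOpX {I J : Type*} [Fintype I] [Fintype J] {X : Submodule ℂ (Matrix I J ℂ)}
    (T : X →ₗ[ℂ] X) : Prop :=
  ∀ v : X, 0 ≤ hsInner (v : Matrix I J ℂ) ((T v : X) : Matrix I J ℂ)


/-- The block-diagonal subspace of matrices indexed by sigma types: entries vanish off
the diagonal blocks.  For rectangular blocks this is the TRO `⊕_i M_{n_i, m_i}`. -/
def blockDiag {k : ℕ} (n m : Fin k → ℕ) :
    Submodule ℂ (Matrix (Σ i, Fin (n i)) (Σ i, Fin (m i)) ℂ) where
  carrier := {x | ∀ u v, u.1 ≠ v.1 → x u v = 0}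
  add_mem' := by
    intro a b ha hb u v h
    simp [Matrix.add_apply, ha u v h, hb u v h]
  zero_mem' := by intro u v h; rfl
  smul_mem' := by
    intro c x hx u v h
    simp [Matrix.smul_apply, hx u v h]

/-- The canonical matrix unit `e_{ab}` of the `i`-th diagonal block, as an element of the
block-diagonal TRO. -/
def basElt {k : ℕ} (n m : Fin k → ℕ) (i : Fin k) (a : Fin (n i)) (b : Fin (m i)) :
    blockDiag n m :=
  ⟨Matrix.single ⟨i, a⟩ ⟨i, b⟩ 1, by
    intro u v huv
    by_cases h : (⟨i, a⟩ : Σ j, Fin (n j)) = u ∧ (⟨i, b⟩ : Σ j, Fin (m j)) = v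
    · exact absurd (by rw [← h.1, ← h.2]) huv
    · simp [Matrix.single, h]⟩

/-- entry-reading vector of a matrix, under `ℂ^B ⊗ ℂ^E ≅ M_{B×E}`. -/
def vecE {B E : Type*} (x : Matrix B E ℂ) : B × E → ℂ := fun p => x p.1 p.2

/-- Inner product on tuples of elements of a subspace of matrices. -/
def pInner {I J C : Type*} [Fintype I] [Fintype J] [Fintype C]
    {X : Submodule ℂ (Matrix I J ℂ)} (v w : C → X) : ℂ :=
  ∑ c, hsInner ((v c : X) : Matrix I J ℂ) ((w c : X) : Matrix I J ℂ)

/-- Ampliation `id_C ⊗ Φ` of a map defined on operators on a subspace `X` of matrices. -/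
def amplX {I J B : Type*} [Fintype I] [Fintype J] [Fintype B]
    {X : Submodule ℂ (Matrix I J ℂ)} (C : Type*) [Fintype C] [DecidableEq C]
    (Φ : (X →ₗ[ℂ] X) →ₗ[ℂ] Matrix B B ℂ) :
    ((C → X) →ₗ[ℂ] (C → X)) →ₗ[ℂ] Matrix (C × B) (C × B) ℂ where
  toFun T := Matrix.of fun p q =>
    Φ (LinearMap.proj p.1 ∘ₗ T ∘ₗ LinearMap.single ℂ (fun _ : C => X) q.1) p.2 q.2
  map_add' T S := by
    funext p q
    have h : (LinearMap.proj p.1 ∘ₗ (T + S) ∘ₗ LinearMap.single ℂ (fun _ : C => X) q.1 :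
          X →ₗ[ℂ] X)
        = LinearMap.proj p.1 ∘ₗ T ∘ₗ LinearMap.single ℂ (fun _ : C => X) q.1
          + LinearMap.proj p.1 ∘ₗ S ∘ₗ LinearMap.single ℂ (fun _ : C => X) q.1 := by
      ext z; rfl
    show Φ _ p.2 q.2 = _
    rw [h, map_add]; rfl
  map_smul' c T := by
    funext p q
    have h : (LinearMap.proj p.1 ∘ₗ (c • T) ∘ₗ LinearMap.single ℂ (fun _ : C => X) q.1 :
          X →ₗ[ℂ] X)
        = c • (LinearMap.proj p.1 ∘ₗ T ∘ₗ LinearMap.single ℂ (fun _ : C => X) q.1) := by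
      ext z; rfl
    show Φ _ p.2 q.2 = _
    rw [h, LinearMap.map_smul]; rfl

/-- The direct sum of partial traces `⊕_i (id_{n_i} ⊗ tr_{m_i})`. -/
def sumPartialTraces {k : ℕ} (n m : Fin k → ℕ) :
    Matrix (Σ i, Fin (n i) × Fin (m i)) (Σ i, Fin (n i) × Fin (m i)) ℂ →ₗ[ℂ]
      Matrix (Σ i, Fin (n i)) (Σ i, Fin (n i)) ℂ where
  toFun ρ := Matrix.of fun u v =>
    if h : u.1 = v.1 then
      ∑ b : Fin (m u.1), ρ ⟨u.1, (u.2, b)⟩ ⟨v.1, (v.2, Fin.cast (congrArg m h) b)⟩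
    else 0
  map_add' ρ σ := by
    funext u v
    simp only [Matrix.of_apply, Matrix.add_apply]
    by_cases h : u.1 = v.1
    · rw [dif_pos h, dif_pos h, dif_pos h, Finset.sum_add_distrib]
    · rw [dif_neg h, dif_neg h, dif_neg h, add_zero]
  map_smul' c ρ := by
    funext u v
    simp only [Matrix.of_apply, Matrix.smul_apply, smul_eq_mul, RingHom.id_apply]
    by_cases h : u.1 = v.1
    · rw [dif_pos h, dif_pos h, Finset.mul_sum]
    · rw [dif_neg h, dif_neg h, mul_zero]

/-- Random unitary channel `ρ ↦ Σ_g q(g) u(g) ρ u(g)ᴴ`. -/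
def randUnitary {G : Type*} [Fintype G] {H : Type*} [Fintype H]
    (u : G → Matrix H H ℂ) (q : G → ℝ) :
    Matrix H H ℂ →ₗ[ℂ] Matrix H H ℂ where
  toFun ρ := ∑ g, (q g : ℂ) • (u g * ρ * (u g)ᴴ)
  map_add' ρ σ := by
    simp [Matrix.mul_add, Matrix.add_mul, smul_add, Finset.sum_add_distrib]
  map_smul' c ρ := by
    simp only [RingHom.id_apply]
    rw [Finset.smul_sum]
    refine Finset.sum_congr rfl fun g _ => ?_
    rw [Matrix.mul_smul, Matrix.smul_mul, smul_smul, smul_smul, mul_comm]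

/-- The negative cb-entropy `-S_cb(Φ)`: the supremum over pure bipartite inputs of
`H(ω^A) - H(ω^{AB})`. -/
def negScb {A B : Type*} [Fintype A] [Fintype B] [DecidableEq A] [DecidableEq B]
    (Φ : Matrix A A ℂ →ₗ[ℂ] Matrix B B ℂ) : ℝ :=
  sSup {r | ∃ v : A × A → ℂ, (∑ p, Complex.normSq (v p)) = 1 ∧
    r = vnEntropy (trRight (ampl A Φ (Matrix.vecMulVec v (star v)))) -
        vnEntropy (ampl A Φ (Matrix.vecMulVec v (star v)))}

/-- The unit vector of the maximally entangled state `(1/√m) Σ_i |ii⟩`. -/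
def maxEntVec (m : ℕ) : Fin m × Fin m → ℂ :=
  fun ij => if ij.1 = ij.2 then (1 / Real.sqrt m : ℝ) else 0

/-- The square root of a positive semidefinite matrix (removed from Mathlib; old definition). -/
def _root_.Matrix.PosSemidef.sqrt {n 𝕜 : Type*} [Fintype n] [DecidableEq n] [RCLike 𝕜]
    {A : Matrix n n 𝕜} (hA : A.PosSemidef) : Matrix n n 𝕜 :=
  hA.1.eigenvectorUnitary.1 * diagonal ((↑) ∘ (√·) ∘ hA.1.eigenvalues) *
    (star hA.1.eigenvectorUnitary : Matrix n n 𝕜)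

lemma psdSqrt_conjTranspose {n : Type*} [Fintype n] [DecidableEq n]
    {A : Matrix n n ℂ} (hA : A.PosSemidef) : hA.sqrtᴴ = hA.sqrt := by
  unfold Matrix.PosSemidef.sqrt
  rw [conjTranspose_mul, conjTranspose_mul, diagonal_conjTranspose, Matrix.mul_assoc]
  have hs : star (((RCLike.ofReal : ℝ → ℂ) ∘ (√·) ∘ hA.1.eigenvalues) : n → ℂ) = ((RCLike.ofReal : ℝ → ℂ) ∘ (√·) ∘ hA.1.eigenvalues) := by
    funext i
    simp [RCLike.conj_ofReal]
  rw [hs]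
  simp [Matrix.star_eq_conjTranspose, Matrix.mul_assoc]

lemma psdSqrt_mul_self {n : Type*} [Fintype n] [DecidableEq n]
    {A : Matrix n n ℂ} (hA : A.PosSemidef) : hA.sqrt * hA.sqrt = A := by
  unfold Matrix.PosSemidef.sqrt
  have hU : (star hA.1.eigenvectorUnitary : Matrix n n ℂ) * hA.1.eigenvectorUnitary.1 = 1 :=
    Matrix.UnitaryGroup.star_mul_self _
  have hD : diagonal (((RCLike.ofReal : ℝ → ℂ) ∘ (√·) ∘ hA.1.eigenvalues) : n → ℂ) *
      diagonal (((RCLike.ofReal : ℝ → ℂ) ∘ (√·) ∘ hA.1.eigenvalues) : n → ℂ)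
      = diagonal (RCLike.ofReal ∘ hA.1.eigenvalues) := by
    rw [diagonal_mul_diagonal]
    congr 1
    funext i
    simp only [Function.comp_apply]
    rw [← RCLike.ofReal_mul, Real.mul_self_sqrt (hA.eigenvalues_nonneg i)]
  conv_rhs => rw [hA.1.spectral_theorem, Unitary.conjStarAlgAut_apply]
  rw [← hD]
  simp only [Matrix.mul_assoc]
  rw [← Matrix.mul_assoc (star (hA.1.eigenvectorUnitary : Matrix n n ℂ)), hU, Matrix.one_mul]


section hsAux

variable {I J : Type*} [Fintype I] [Fintype J]

lemma hsInner_expand (x y : Matrix I J ℂ) :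
    hsInner x y = ∑ j, ∑ i, star (x i j) * y i j := by
  simp [hsInner, Matrix.trace, Matrix.diag, Matrix.mul_apply, Matrix.conjTranspose_apply]

lemma hsInner_add_right (x y z : Matrix I J ℂ) :
    hsInner x (y + z) = hsInner x y + hsInner x z := by
  simp [hsInner, Matrix.mul_add]

lemma hsInner_add_left (x y z : Matrix I J ℂ) :
    hsInner (x + y) z = hsInner x z + hsInner y z := by
  simp [hsInner, Matrix.add_mul]

lemma hsInner_smul_right (a : ℂ) (x y : Matrix I J ℂ) :
    hsInner x (a • y) = a * hsInner x y := by
  simp [hsInner, Matrix.mul_smul]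

lemma hsInner_smul_left (a : ℂ) (x y : Matrix I J ℂ) :
    hsInner (a • x) y = star a * hsInner x y := by
  simp [hsInner, Matrix.conjTranspose_smul, Matrix.smul_mul]

lemma hsInner_sum_right {γ : Type*} (s : Finset γ) (x : Matrix I J ℂ) (y : γ → Matrix I J ℂ) :
    hsInner x (∑ i ∈ s, y i) = ∑ i ∈ s, hsInner x (y i) := by
  simp [hsInner, Matrix.mul_sum]

lemma hsInner_sum_left {γ : Type*} (s : Finset γ) (x : γ → Matrix I J ℂ) (y : Matrix I J ℂ) :
    hsInner (∑ i ∈ s, x i) y = ∑ i ∈ s, hsInner (x i) y := by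
  simp only [hsInner, Matrix.conjTranspose_sum, Matrix.sum_mul, Matrix.trace_sum]

lemma star_hsInner (x y : Matrix I J ℂ) : star (hsInner x y) = hsInner y x := by
  rw [hsInner, hsInner, ← Matrix.trace_conjTranspose]
  simp [Matrix.conjTranspose_mul]

lemma hsInner_self_eq (x : Matrix I J ℂ) :
    hsInner x x = ((∑ j, ∑ i, Complex.normSq (x i j) : ℝ) : ℂ) := by
  rw [hsInner_expand]
  push_cast
  refine Finset.sum_congr rfl fun j _ => Finset.sum_congr rfl fun i _ => ?_
  rw [Complex.normSq_eq_conj_mul_self]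
  rfl

lemma hsInner_self_nonneg (x : Matrix I J ℂ) : 0 ≤ hsInner x x := by
  rw [hsInner_self_eq]
  rw [Complex.zero_le_real]
  exact Finset.sum_nonneg fun j _ => Finset.sum_nonneg fun i _ => Complex.normSq_nonneg _

lemma hsInner_self_eq_zero {x : Matrix I J ℂ} (h : hsInner x x = 0) : x = 0 := by
  rw [hsInner_self_eq] at h
  norm_cast at h
  have h' : ∀ j ∈ Finset.univ, ∑ i, Complex.normSq (x i j) = 0 :=
    (Finset.sum_eq_zero_iff_of_nonneg fun j _ =>
      Finset.sum_nonneg fun i _ => Complex.normSq_nonneg _).mp h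
  ext i j
  have h'' := (Finset.sum_eq_zero_iff_of_nonneg fun i _ => Complex.normSq_nonneg _).mp
    (h' j (Finset.mem_univ _)) i (Finset.mem_univ _)
  simpa using Complex.normSq_eq_zero.mp h''

end hsAux

section sumAux

variable {M : Type*} [AddCommMonoid M]

lemma sum_comm3 {α β γ : Type*} [Fintype α] [Fintype β] [Fintype γ] (h : α → β → γ → M) :
    ∑ a, ∑ b, ∑ c, h a b c = ∑ c, ∑ a, ∑ b, h a b c :=
  (Finset.sum_congr rfl fun _ _ => Finset.sum_comm).trans Finset.sum_comm

end sumAux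

/-- Complex polarization: a nonnegative sesquilinear form is hermitian. -/
lemma polar {V : Type*} [AddCommGroup V] [Module ℂ V] (B : V → V → ℂ)
    (hal : ∀ v w z, B (v + w) z = B v z + B w z)
    (har : ∀ z v w, B z (v + w) = B z v + B z w)
    (hsl : ∀ (a : ℂ) v z, B (a • v) z = star a * B v z)
    (hsr : ∀ (a : ℂ) z v, B z (a • v) = a * B z v)
    (hpos : ∀ v, 0 ≤ B v v) (v w : V) : star (B w v) = B v w := by
  have hre : ∀ z, star (B z z) = B z z := by
    intro z
    have h := hpos z
    rw [Complex.le_def] at h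
    rw [Complex.star_def, Complex.conj_eq_iff_im]
    exact h.2.symm
  have h1 := hre (v + w)
  have h2 := hre (v + Complex.I • w)
  rw [hal, har, har] at h1 h2
  rw [hsl, hsr, hsr, hsl] at h2
  have hv := hre v
  have hw := hre w
  rw [Complex.star_def]
  simp only [Complex.star_def, map_add, _root_.map_mul, map_neg, Complex.conj_I] at h1 h2 hv hw
  have hI : Complex.I * Complex.I = -1 := Complex.I_mul_I
  linear_combination (h1 - hv - hw) / 2 - Complex.I * (h2 - hv + (Complex.I * Complex.I) * hw) / 2 +
    ((- (starRingEnd ℂ) (B v w) + (starRingEnd ℂ) (B w v) - B v w + B w v) / 2) * hI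


section onb

variable {I J : Type*} [Fintype I] [Fintype J]

/-- There is a finite family in `X` that is orthonormal for `hsInner`, expands every
element of `X`, and computes traces of operators on `X`. -/
lemma exists_onb (X : Submodule ℂ (Matrix I J ℂ)) :
    ∃ (n : ℕ) (u : Fin n → X),
      (∀ i j, hsInner (u i : Matrix I J ℂ) (u j : Matrix I J ℂ) = if i = j then 1 else 0) ∧
      (∀ z : X, z = ∑ i, hsInner (u i : Matrix I J ℂ) (z : Matrix I J ℂ) • u i) ∧
      (∀ T : X →ₗ[ℂ] X, LinearMap.trace ℂ X T
          = ∑ i, hsInner (u i : Matrix I J ℂ) ((T (u i) : X) : Matrix I J ℂ)) := by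
  letI core : InnerProductSpace.Core ℂ X :=
    { inner := fun x y => hsInner (x : Matrix I J ℂ) (y : Matrix I J ℂ)
      conj_inner_symm := fun x y => star_hsInner _ _
      re_inner_nonneg := fun x => by
        have h := hsInner_self_nonneg (x : Matrix I J ℂ)
        rw [Complex.le_def] at h
        exact h.1
      add_left := fun x y z => by
        show hsInner (((x + y : X) : Matrix I J ℂ)) (z : Matrix I J ℂ) = _
        rw [Submodule.coe_add]; exact hsInner_add_left _ _ _
      smul_left := fun x y r => by
        show hsInner (((r • x : X) : Matrix I J ℂ)) (y : Matrix I J ℂ) = _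
        rw [Submodule.coe_smul]; exact hsInner_smul_left _ _ _
      definite := fun x hx => by
        have := hsInner_self_eq_zero hx
        exact Subtype.ext this }
  letI : NormedAddCommGroup X := core.toNormedAddCommGroup
  letI : InnerProductSpace ℂ X := InnerProductSpace.ofCore core.toCore
  let b := stdOrthonormalBasis ℂ X
  have hinner : ∀ x y : X, (inner ℂ x y : ℂ) = hsInner (x : Matrix I J ℂ) (y : Matrix I J ℂ) :=
    fun x y => rfl
  refine ⟨Module.finrank ℂ X, b, ?_, ?_, ?_⟩
  · intro i j
    rw [← hinner]
    exact orthonormal_iff_ite.mp b.orthonormal i j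
  · intro z
    conv_lhs => rw [← b.sum_repr z]
    refine Finset.sum_congr rfl fun i _ => ?_
    rw [b.repr_apply_apply, hinner]
  · intro T
    rw [LinearMap.trace_eq_matrix_trace ℂ b.toBasis T, Matrix.trace]
    refine Finset.sum_congr rfl fun i _ => ?_
    rw [Matrix.diag_apply, LinearMap.toMatrix_apply, b.coe_toBasis,
      b.coe_toBasis_repr_apply, b.repr_apply_apply, hinner]

end onb


lemma hsInner_zero_left {I J : Type*} [Fintype I] [Fintype J] (y : Matrix I J ℂ) :
    hsInner (0 : Matrix I J ℂ) y = 0 := by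
  simp [hsInner]

lemma rankOne_apply {I J : Type*} [Fintype I] [Fintype J] (X : Submodule ℂ (Matrix I J ℂ))
    (x y z : X) :
    rankOne X x y z = hsInner (y : Matrix I J ℂ) (z : Matrix I J ℂ) • x := rfl

/-- Rank-one decomposition of an operator on `X` along an orthonormal family. -/
lemma rankOne_decomp {I J : Type*} [Fintype I] [Fintype J] (X : Submodule ℂ (Matrix I J ℂ))
    {n : ℕ} (u : Fin n → X)
    (hexp : ∀ z : X, z = ∑ i, hsInner (u i : Matrix I J ℂ) (z : Matrix I J ℂ) • u i)
    (S : X →ₗ[ℂ] X) :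
    S = ∑ i, ∑ j, hsInner (u i : Matrix I J ℂ) ((S (u j) : X) : Matrix I J ℂ) •
      rankOne X (u i) (u j) := by
  refine LinearMap.ext fun z => ?_
  conv_lhs => rw [hexp z, map_sum]
  simp only [LinearMap.coe_sum, Finset.sum_apply, LinearMap.smul_apply, rankOne_apply,
    _root_.map_smul]
  conv_rhs => rw [Finset.sum_comm]
  refine Finset.sum_congr rfl fun j _ => ?_
  conv_lhs => rw [hexp (S (u j))]
  rw [Finset.smul_sum]
  refine Finset.sum_congr rfl fun i _ => ?_
  rw [smul_smul, smul_smul, mul_comm]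

/-- For a normalized density `f` independent of the right algebra of a TRO
`X`, the map `V_f : |x⟩ ↦ |x √f⟩` is an isometry; consequently the map `N_f` determined by
`N_f(|x⟩⟨y|) = x f yᴴ` equals `ρ ↦ tr_E(V_f ρ V_fᴴ)` and is completely positive and
trace-preserving. -/
theorem stmt2 {dB dE : ℕ} (X : Submodule ℂ (Matrix (Fin dB) (Fin dE) ℂ)) (hX : IsTRO X)
    (f : Matrix (Fin dE) (Fin dE) ℂ) (hf : f.PosSemidef) (hf1 : ntrace f = 1)
    (hind : ∀ y ∈ rightAlg X, ntrace (f * y) = ntrace f * ntrace y)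
    (Nf : (X →ₗ[ℂ] X) →ₗ[ℂ] Matrix (Fin dB) (Fin dB) ℂ)
    (hNf : ∀ x y : X, Nf (rankOne X x y) = (x : Matrix (Fin dB) (Fin dE) ℂ) * f * (y : Matrix (Fin dB) (Fin dE) ℂ)ᴴ) :
    (∀ x : X, hsInner ((x : Matrix (Fin dB) (Fin dE) ℂ) * hf.sqrt) ((x : Matrix (Fin dB) (Fin dE) ℂ) * hf.sqrt)
        = hsInner (x : Matrix (Fin dB) (Fin dE) ℂ) (x : Matrix (Fin dB) (Fin dE) ℂ)) ∧
    (∀ x y : X, Nf (rankOne X x y) =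
      trRight (Matrix.vecMulVec (vecE ((x : Matrix (Fin dB) (Fin dE) ℂ) * hf.sqrt))
        (star (vecE ((y : Matrix (Fin dB) (Fin dE) ℂ) * hf.sqrt))))) ∧
    (∀ (d : ℕ) (T : (Fin d → X) →ₗ[ℂ] (Fin d → X)),
      (∀ v, 0 ≤ pInner v (T v)) → (amplX (Fin d) Nf T).PosSemidef) ∧
    (∀ T : X →ₗ[ℂ] X, (Nf T).trace = LinearMap.trace ℂ X T) := by
  classical
  obtain ⟨n, u, honb, hexp, htrace⟩ := exists_onb X
  have hgH : hf.sqrtᴴ = hf.sqrt := psdSqrt_conjTranspose hf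
  have hgg : hf.sqrt * hf.sqrt = f := psdSqrt_mul_self hf
  have hfH : fᴴ = f := hf.isHermitian
  -- independence at the level of unnormalized traces
  have htr0 : ∀ y ∈ rightAlg X, (f * y).trace = y.trace := by
    intro y hy
    have h := hind y hy
    rw [hf1, one_mul] at h
    unfold ntrace at h
    rcases Nat.eq_zero_or_pos dE with hdE | hdE
    · have : IsEmpty (Fin dE) := by rw [hdE]; infer_instance
      simp [Matrix.trace]
    · have hc : ((Fintype.card (Fin dE) : ℂ)) ≠ 0 := by
        rw [Fintype.card_fin]
        exact_mod_cast hdE.ne'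
      field_simp at h
      exact h
  have hmem : ∀ x y : X, ((x : Matrix (Fin dB) (Fin dE) ℂ)ᴴ * (y : Matrix (Fin dB) (Fin dE) ℂ))
      ∈ rightAlg X := fun x y => Submodule.subset_span ⟨x, x.2, y, y.2, rfl⟩
  have key : ∀ x y : X,
      (f * ((x : Matrix (Fin dB) (Fin dE) ℂ)ᴴ * (y : Matrix (Fin dB) (Fin dE) ℂ))).trace
        = ((x : Matrix (Fin dB) (Fin dE) ℂ)ᴴ * (y : Matrix (Fin dB) (Fin dE) ℂ)).trace :=
    fun x y => htr0 _ (hmem x y)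
  -- the isometry property (in polarized form)
  have hiso : ∀ x y : X,
      hsInner ((x : Matrix (Fin dB) (Fin dE) ℂ) * hf.sqrt)
          ((y : Matrix (Fin dB) (Fin dE) ℂ) * hf.sqrt)
        = hsInner (x : Matrix (Fin dB) (Fin dE) ℂ) (y : Matrix (Fin dB) (Fin dE) ℂ) := by
    intro x y
    rw [hsInner, hsInner, Matrix.conjTranspose_mul, hgH]
    calc (hf.sqrt * (x : Matrix (Fin dB) (Fin dE) ℂ)ᴴ *
            ((y : Matrix (Fin dB) (Fin dE) ℂ) * hf.sqrt)).trace
        = (((y : Matrix (Fin dB) (Fin dE) ℂ) * hf.sqrt) *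
            (hf.sqrt * (x : Matrix (Fin dB) (Fin dE) ℂ)ᴴ)).trace := Matrix.trace_mul_comm _ _
      _ = ((y : Matrix (Fin dB) (Fin dE) ℂ) * (f * (x : Matrix (Fin dB) (Fin dE) ℂ)ᴴ)).trace := by
          rw [Matrix.mul_assoc, ← Matrix.mul_assoc hf.sqrt hf.sqrt, hgg]
      _ = ((f * (x : Matrix (Fin dB) (Fin dE) ℂ)ᴴ) * (y : Matrix (Fin dB) (Fin dE) ℂ)).trace :=
          Matrix.trace_mul_comm _ _
      _ = (f * ((x : Matrix (Fin dB) (Fin dE) ℂ)ᴴ * (y : Matrix (Fin dB) (Fin dE) ℂ))).trace := by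
          rw [Matrix.mul_assoc]
      _ = ((x : Matrix (Fin dB) (Fin dE) ℂ)ᴴ * (y : Matrix (Fin dB) (Fin dE) ℂ)).trace := key x y
  -- the factorization x f yᴴ = (x √f)(y √f)ᴴ
  have hmat : ∀ x y : X,
      (x : Matrix (Fin dB) (Fin dE) ℂ) * f * (y : Matrix (Fin dB) (Fin dE) ℂ)ᴴ
        = ((x : Matrix (Fin dB) (Fin dE) ℂ) * hf.sqrt) *
            ((y : Matrix (Fin dB) (Fin dE) ℂ) * hf.sqrt)ᴴ := by
    intro x y
    rw [Matrix.conjTranspose_mul, hgH, ← Matrix.mul_assoc,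
      Matrix.mul_assoc (x : Matrix (Fin dB) (Fin dE) ℂ) hf.sqrt hf.sqrt, hgg]
  have hprod : ∀ (x y : X) (b b' : Fin dB),
      ((x : Matrix (Fin dB) (Fin dE) ℂ) * f * (y : Matrix (Fin dB) (Fin dE) ℂ)ᴴ) b b'
        = ∑ e, ((x : Matrix (Fin dB) (Fin dE) ℂ) * hf.sqrt) b e *
            star (((y : Matrix (Fin dB) (Fin dE) ℂ) * hf.sqrt) b' e) := by
    intro x y b b'
    rw [hmat, Matrix.mul_apply]
    exact Finset.sum_congr rfl fun e _ => by rw [Matrix.conjTranspose_apply]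
  -- expansion of Nf on arbitrary operators
  have hNfS : ∀ S' : X →ₗ[ℂ] X, Nf S' = ∑ i, ∑ j,
      hsInner (u i : Matrix (Fin dB) (Fin dE) ℂ) ((S' (u j) : X) : Matrix (Fin dB) (Fin dE) ℂ) •
        ((u i : Matrix (Fin dB) (Fin dE) ℂ) * f * (u j : Matrix (Fin dB) (Fin dE) ℂ)ᴴ) := by
    intro S'
    conv_lhs => rw [rankOne_decomp X u hexp S', map_sum]
    refine Finset.sum_congr rfl fun i _ => ?_
    rw [map_sum]
    refine Finset.sum_congr rfl fun j _ => ?_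
    rw [_root_.map_smul, hNf]
  refine ⟨fun x => hiso x x, ?_, ?_, ?_⟩
  · -- Stinespring form
    intro x y
    rw [hNf, hmat]
    ext b b'
    have hR : trRight (Matrix.vecMulVec (vecE ((x : Matrix (Fin dB) (Fin dE) ℂ) * hf.sqrt))
          (star (vecE ((y : Matrix (Fin dB) (Fin dE) ℂ) * hf.sqrt)))) b b'
        = ∑ e, ((x : Matrix (Fin dB) (Fin dE) ℂ) * hf.sqrt) b e *
            star (((y : Matrix (Fin dB) (Fin dE) ℂ) * hf.sqrt) b' e) := by
      show ∑ e : Fin dE, Matrix.vecMulVec (vecE ((x : Matrix (Fin dB) (Fin dE) ℂ) * hf.sqrt))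
          (star (vecE ((y : Matrix (Fin dB) (Fin dE) ℂ) * hf.sqrt))) (b, e) (b', e) = _
      simp [Matrix.vecMulVec_apply, vecE]
    rw [hR, Matrix.mul_apply]
    refine Finset.sum_congr rfl fun e _ => ?_
    rw [Matrix.conjTranspose_apply]
  · -- complete positivity
    intro d T hT
    set S : Fin d → Fin d → (X →ₗ[ℂ] X) := fun p q =>
      LinearMap.proj p ∘ₗ T ∘ₗ LinearMap.single ℂ (fun _ : Fin d => X) q with hS
    have hM : ∀ (p : Fin d) (b : Fin dB) (q : Fin d) (b' : Fin dB),
        amplX (Fin d) Nf T (p, b) (q, b') = Nf (S p q) b b' := fun p b q b' => rfl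
    -- sesquilinear positivity gives hermitian symmetry
    have hBpol : ∀ v w : Fin d → X,
        star (pInner w (T v)) = pInner v (T w) := by
      refine polar (fun v w => pInner v (T w)) ?_ ?_ ?_ ?_ hT
      · intro v w z
        simp only [pInner, ← Finset.sum_add_distrib]
        refine Finset.sum_congr rfl fun c _ => ?_
        have : (((v + w) c : X) : Matrix (Fin dB) (Fin dE) ℂ)
            = ((v c : X) : Matrix (Fin dB) (Fin dE) ℂ) + ((w c : X) : Matrix (Fin dB) (Fin dE) ℂ) := rfl
        rw [this, hsInner_add_left]
      · intro z v w
        simp only [pInner, map_add, ← Finset.sum_add_distrib]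
        refine Finset.sum_congr rfl fun c _ => ?_
        have : (((T v + T w) c : X) : Matrix (Fin dB) (Fin dE) ℂ)
            = (((T v) c : X) : Matrix (Fin dB) (Fin dE) ℂ) + (((T w) c : X) : Matrix (Fin dB) (Fin dE) ℂ) := rfl
        rw [this, hsInner_add_right]
      · intro a v z
        simp only [pInner, Finset.mul_sum]
        refine Finset.sum_congr rfl fun c _ => ?_
        have : (((a • v) c : X) : Matrix (Fin dB) (Fin dE) ℂ)
            = a • ((v c : X) : Matrix (Fin dB) (Fin dE) ℂ) := rfl
        rw [this, hsInner_smul_left]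
      · intro a z v
        simp only [pInner, _root_.map_smul, Finset.mul_sum]
        refine Finset.sum_congr rfl fun c _ => ?_
        have : (((a • T v) c : X) : Matrix (Fin dB) (Fin dE) ℂ)
            = a • (((T v) c : X) : Matrix (Fin dB) (Fin dE) ℂ) := rfl
        rw [this, hsInner_smul_right]
    have hBsingle : ∀ (p q : Fin d) (x y : X),
        pInner (Pi.single p x) (T (Pi.single q y))
          = hsInner (x : Matrix (Fin dB) (Fin dE) ℂ) ((S p q y : X) : Matrix (Fin dB) (Fin dE) ℂ) := by
      intro p q x y
      rw [pInner, Finset.sum_eq_single p]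
      · rw [Pi.single_eq_same]
        rfl
      · intro c _ hc
        have h0 : (Pi.single p x : Fin d → X) c = 0 :=
          Pi.single_eq_of_ne (M := fun _ : Fin d => X) hc x
        rw [h0, ZeroMemClass.coe_zero, hsInner_zero_left]
      · intro h; exact absurd (Finset.mem_univ p) h
    have hsym : ∀ (p q : Fin d) (i j : Fin n),
        star (hsInner (u i : Matrix (Fin dB) (Fin dE) ℂ)
            ((S q p (u j) : X) : Matrix (Fin dB) (Fin dE) ℂ))
          = hsInner (u j : Matrix (Fin dB) (Fin dE) ℂ)
            ((S p q (u i) : X) : Matrix (Fin dB) (Fin dE) ℂ) := by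
      intro p q i j
      have h := hBpol (Pi.single p (u j)) (Pi.single q (u i))
      rwa [hBsingle, hBsingle] at h
    have hconj_entry : ∀ (i j : Fin n) (b b' : Fin dB),
        star (((u i : Matrix (Fin dB) (Fin dE) ℂ) * f * (u j : Matrix (Fin dB) (Fin dE) ℂ)ᴴ) b' b)
          = ((u j : Matrix (Fin dB) (Fin dE) ℂ) * f * (u i : Matrix (Fin dB) (Fin dE) ℂ)ᴴ) b b' := by
      intro i j b b'
      have h : ((u i : Matrix (Fin dB) (Fin dE) ℂ) * f * (u j : Matrix (Fin dB) (Fin dE) ℂ)ᴴ)ᴴ = (u j : Matrix (Fin dB) (Fin dE) ℂ) * f * (u i : Matrix (Fin dB) (Fin dE) ℂ)ᴴ := by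
        rw [Matrix.conjTranspose_mul, Matrix.conjTranspose_mul,
          Matrix.conjTranspose_conjTranspose, hfH, Matrix.mul_assoc]
      calc star (((u i : Matrix (Fin dB) (Fin dE) ℂ) * f * (u j : Matrix (Fin dB) (Fin dE) ℂ)ᴴ) b' b)
          = (((u i : Matrix (Fin dB) (Fin dE) ℂ) * f * (u j : Matrix (Fin dB) (Fin dE) ℂ)ᴴ)ᴴ) b b' := by rw [Matrix.conjTranspose_apply]
        _ = ((u j : Matrix (Fin dB) (Fin dE) ℂ) * f * (u i : Matrix (Fin dB) (Fin dE) ℂ)ᴴ) b b' := by rw [h]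
    refine Matrix.PosSemidef.of_dotProduct_mulVec_nonneg ?_ ?_
    · -- hermitian
      show ((amplX (Fin d) Nf) T)ᴴ = (amplX (Fin d) Nf) T
      ext x y
      obtain ⟨p, b⟩ := x
      obtain ⟨q, b'⟩ := y
      rw [Matrix.conjTranspose_apply, hM q b' p b, hM p b q b', hNfS (S q p), hNfS (S p q)]
      simp only [Matrix.sum_apply, Matrix.smul_apply, smul_eq_mul, star_sum, star_mul',
        hsym, hconj_entry]
      exact Finset.sum_comm
    · intro w
      set α : Fin d → Fin n → Fin dE → ℂ := fun p i e =>
        ∑ b, star (w (p, b)) * (((u i : Matrix (Fin dB) (Fin dE) ℂ) * hf.sqrt) b e) with hα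
      set vv : Fin dE → (Fin d → X) := fun e p => ∑ i, star (α p i e) • u i with hvv
      have hstarα : ∀ (q : Fin d) (j : Fin n) (e : Fin dE), star (α q j e)
          = ∑ b', w (q, b') * star (((u j : Matrix (Fin dB) (Fin dE) ℂ) * hf.sqrt) b' e) := by
        intro q j e
        simp only [hα, star_sum, star_mul', star_star]
      have hentry : ∀ (p q : Fin d) (b b' : Fin dB), Nf (S p q) b b'
          = ∑ t : Fin n × Fin n × Fin dE,
              hsInner (u t.1 : Matrix (Fin dB) (Fin dE) ℂ) ((S p q (u t.2.1) : X) : Matrix (Fin dB) (Fin dE) ℂ) *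
                (((u t.1 : Matrix (Fin dB) (Fin dE) ℂ) * hf.sqrt) b t.2.2 *
                  star (((u t.2.1 : Matrix (Fin dB) (Fin dE) ℂ) * hf.sqrt) b' t.2.2)) := by
        intro p q b b'
        rw [hNfS]
        conv_rhs => rw [Fintype.sum_prod_type]
        simp only [Matrix.sum_apply, Matrix.smul_apply, smul_eq_mul]
        refine Finset.sum_congr rfl fun i _ => ?_
        conv_rhs => rw [Fintype.sum_prod_type]
        refine Finset.sum_congr rfl fun j _ => ?_
        rw [hprod, Finset.mul_sum]
      have hdot : star w ⬝ᵥ (amplX (Fin d) Nf) T *ᵥ w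
          = ∑ p, ∑ b, ∑ q, ∑ b', star (w (p, b)) * (Nf (S p q) b b' * w (q, b')) := by
        calc star w ⬝ᵥ (amplX (Fin d) Nf) T *ᵥ w
            = ∑ x : Fin d × Fin dB, star (w x) * ∑ y : Fin d × Fin dB,
                (amplX (Fin d) Nf) T x y * w y := rfl
          _ = ∑ p, ∑ b, star (w (p, b)) * ∑ q, ∑ b', Nf (S p q) b b' * w (q, b') := by
              rw [Fintype.sum_prod_type]
              refine Finset.sum_congr rfl fun p _ => Finset.sum_congr rfl fun b _ => ?_
              congr 1
              rw [Fintype.sum_prod_type]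
              refine Finset.sum_congr rfl fun q _ => Finset.sum_congr rfl fun b' _ => ?_
              rw [hM]
          _ = ∑ p, ∑ b, ∑ q, ∑ b', star (w (p, b)) * (Nf (S p q) b b' * w (q, b')) := by
              refine Finset.sum_congr rfl fun p _ => Finset.sum_congr rfl fun b _ => ?_
              rw [Finset.mul_sum]
              refine Finset.sum_congr rfl fun q _ => ?_
              rw [Finset.mul_sum]
      have hfactor : ∀ (p q : Fin d) (t : Fin n × Fin n × Fin dE),
          ∑ b, ∑ b', star (w (p, b)) *
              ((hsInner (u t.1 : Matrix (Fin dB) (Fin dE) ℂ) ((S p q (u t.2.1) : X) : Matrix (Fin dB) (Fin dE) ℂ) *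
                (((u t.1 : Matrix (Fin dB) (Fin dE) ℂ) * hf.sqrt) b t.2.2 *
                  star (((u t.2.1 : Matrix (Fin dB) (Fin dE) ℂ) * hf.sqrt) b' t.2.2))) * w (q, b'))
            = hsInner (u t.1 : Matrix (Fin dB) (Fin dE) ℂ) ((S p q (u t.2.1) : X) : Matrix (Fin dB) (Fin dE) ℂ) *
                (α p t.1 t.2.2 * star (α q t.2.1 t.2.2)) := by
        intro p q t
        rw [hstarα q t.2.1 t.2.2]
        conv_rhs => rw [hα]
        rw [Finset.sum_mul_sum, Finset.mul_sum]
        refine Finset.sum_congr rfl fun b _ => ?_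
        rw [Finset.mul_sum]
        refine Finset.sum_congr rfl fun b' _ => ?_
        ring
      have hstep : ∀ p q : Fin d,
          ∑ b, ∑ b', star (w (p, b)) * (Nf (S p q) b b' * w (q, b'))
            = ∑ e, ∑ i, ∑ j, hsInner (u i : Matrix (Fin dB) (Fin dE) ℂ) ((S p q (u j) : X) : Matrix (Fin dB) (Fin dE) ℂ) *
                (α p i e * star (α q j e)) := by
        intro p q
        calc ∑ b, ∑ b', star (w (p, b)) * (Nf (S p q) b b' * w (q, b'))
            = ∑ b, ∑ b', ∑ t : Fin n × Fin n × Fin dE, star (w (p, b)) *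
                ((hsInner (u t.1 : Matrix (Fin dB) (Fin dE) ℂ) ((S p q (u t.2.1) : X) : Matrix (Fin dB) (Fin dE) ℂ) *
                  (((u t.1 : Matrix (Fin dB) (Fin dE) ℂ) * hf.sqrt) b t.2.2 *
                    star (((u t.2.1 : Matrix (Fin dB) (Fin dE) ℂ) * hf.sqrt) b' t.2.2))) * w (q, b')) := by
              refine Finset.sum_congr rfl fun b _ => Finset.sum_congr rfl fun b' _ => ?_
              rw [hentry, Finset.sum_mul, Finset.mul_sum]
          _ = ∑ t : Fin n × Fin n × Fin dE, ∑ b, ∑ b', star (w (p, b)) *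
                ((hsInner (u t.1 : Matrix (Fin dB) (Fin dE) ℂ) ((S p q (u t.2.1) : X) : Matrix (Fin dB) (Fin dE) ℂ) *
                  (((u t.1 : Matrix (Fin dB) (Fin dE) ℂ) * hf.sqrt) b t.2.2 *
                    star (((u t.2.1 : Matrix (Fin dB) (Fin dE) ℂ) * hf.sqrt) b' t.2.2))) * w (q, b')) := sum_comm3 _
          _ = ∑ t : Fin n × Fin n × Fin dE,
                hsInner (u t.1 : Matrix (Fin dB) (Fin dE) ℂ) ((S p q (u t.2.1) : X) : Matrix (Fin dB) (Fin dE) ℂ) *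
                  (α p t.1 t.2.2 * star (α q t.2.1 t.2.2)) :=
              Finset.sum_congr rfl fun t _ => hfactor p q t
          _ = ∑ i, ∑ j, ∑ e, hsInner (u i : Matrix (Fin dB) (Fin dE) ℂ) ((S p q (u j) : X) : Matrix (Fin dB) (Fin dE) ℂ) *
                (α p i e * star (α q j e)) := by
              rw [Fintype.sum_prod_type]
              exact Finset.sum_congr rfl fun i _ => by rw [Fintype.sum_prod_type]
          _ = ∑ e, ∑ i, ∑ j, hsInner (u i : Matrix (Fin dB) (Fin dE) ℂ) ((S p q (u j) : X) : Matrix (Fin dB) (Fin dE) ℂ) *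
                (α p i e * star (α q j e)) := sum_comm3 _
      have hTapp : ∀ (z : Fin d → X) (p : Fin d), T z p = ∑ q, S p q (z q) := by
        intro z p
        conv_lhs => rw [← Finset.univ_sum_single z, map_sum]
        rw [Finset.sum_apply]
        exact Finset.sum_congr rfl fun q _ => rfl
      have hcoe_vv : ∀ (e : Fin dE) (p : Fin d),
          ((vv e p : X) : Matrix (Fin dB) (Fin dE) ℂ) = ∑ i, star (α p i e) • ((u i : X) : Matrix (Fin dB) (Fin dE) ℂ) := by
        intro e p
        rw [hvv]
        simp [Submodule.coe_sum]
      have hBv : ∀ e : Fin dE, pInner (vv e) (T (vv e))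
          = ∑ p, ∑ q, ∑ i, ∑ j, hsInner (u i : Matrix (Fin dB) (Fin dE) ℂ) ((S p q (u j) : X) : Matrix (Fin dB) (Fin dE) ℂ) *
              (α p i e * star (α q j e)) := by
        intro e
        rw [pInner]
        refine Finset.sum_congr rfl fun p _ => ?_
        rw [hTapp (vv e) p]
        rw [show (((∑ q, S p q (vv e q)) : X) : Matrix (Fin dB) (Fin dE) ℂ)
            = ∑ q, ((S p q (vv e q) : X) : Matrix (Fin dB) (Fin dE) ℂ) by simp]
        rw [hsInner_sum_right]
        refine Finset.sum_congr rfl fun q _ => ?_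
        have hSvv : S p q (vv e q) = ∑ j, star (α q j e) • S p q (u j) := by
          conv_lhs => rw [hvv]
          simp only [map_sum, _root_.map_smul]
        calc hsInner ((vv e p : X) : Matrix (Fin dB) (Fin dE) ℂ) ((S p q (vv e q) : X) : Matrix (Fin dB) (Fin dE) ℂ)
            = ∑ i, star (star (α p i e)) *
                hsInner ((u i : X) : Matrix (Fin dB) (Fin dE) ℂ) ((S p q (vv e q) : X) : Matrix (Fin dB) (Fin dE) ℂ) := by
              rw [hcoe_vv, hsInner_sum_left]
              exact Finset.sum_congr rfl fun i _ => by rw [hsInner_smul_left]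
          _ = ∑ i, α p i e * ∑ j, star (α q j e) *
                hsInner ((u i : X) : Matrix (Fin dB) (Fin dE) ℂ) ((S p q (u j) : X) : Matrix (Fin dB) (Fin dE) ℂ) := by
              refine Finset.sum_congr rfl fun i _ => ?_
              rw [star_star]
              congr 1
              rw [hSvv, show ((∑ j, star (α q j e) • S p q (u j) : X) : Matrix (Fin dB) (Fin dE) ℂ)
                  = ∑ j, star (α q j e) • ((S p q (u j) : X) : Matrix (Fin dB) (Fin dE) ℂ) by
                    simp [Submodule.coe_sum], hsInner_sum_right]
              exact Finset.sum_congr rfl fun j _ => by rw [hsInner_smul_right]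
          _ = ∑ i, ∑ j, hsInner (u i : Matrix (Fin dB) (Fin dE) ℂ) ((S p q (u j) : X) : Matrix (Fin dB) (Fin dE) ℂ) *
                (α p i e * star (α q j e)) := by
              refine Finset.sum_congr rfl fun i _ => ?_
              rw [Finset.mul_sum]
              exact Finset.sum_congr rfl fun j _ => by ring
      have hfin : star w ⬝ᵥ (amplX (Fin d) Nf) T *ᵥ w = ∑ e, pInner (vv e) (T (vv e)) := by
        rw [hdot]
        calc ∑ p, ∑ b, ∑ q, ∑ b', star (w (p, b)) * (Nf (S p q) b b' * w (q, b'))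
            = ∑ p, ∑ q, ∑ b, ∑ b', star (w (p, b)) * (Nf (S p q) b b' * w (q, b')) :=
              Finset.sum_congr rfl fun p _ => Finset.sum_comm
          _ = ∑ p, ∑ q, ∑ e, ∑ i, ∑ j, hsInner (u i : Matrix (Fin dB) (Fin dE) ℂ) ((S p q (u j) : X) : Matrix (Fin dB) (Fin dE) ℂ) *
                (α p i e * star (α q j e)) :=
              Finset.sum_congr rfl fun p _ => Finset.sum_congr rfl fun q _ => hstep p q
          _ = ∑ e, ∑ p, ∑ q, ∑ i, ∑ j, hsInner (u i : Matrix (Fin dB) (Fin dE) ℂ) ((S p q (u j) : X) : Matrix (Fin dB) (Fin dE) ℂ) *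
                (α p i e * star (α q j e)) := sum_comm3 _
          _ = ∑ e, pInner (vv e) (T (vv e)) :=
              Finset.sum_congr rfl fun e _ => (hBv e).symm
      rw [hfin]
      exact Finset.sum_nonneg fun e _ => hT (vv e)
  · -- trace preservation
    intro T
    have hterm : ∀ i j : Fin n,
        ((u i : Matrix (Fin dB) (Fin dE) ℂ) * f * (u j : Matrix (Fin dB) (Fin dE) ℂ)ᴴ).trace
          = if j = i then (1 : ℂ) else 0 := by
      intro i j
      calc ((u i : Matrix (Fin dB) (Fin dE) ℂ) * f * (u j : Matrix (Fin dB) (Fin dE) ℂ)ᴴ).trace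
          = ((u j : Matrix (Fin dB) (Fin dE) ℂ)ᴴ *
              ((u i : Matrix (Fin dB) (Fin dE) ℂ) * f)).trace := Matrix.trace_mul_comm _ _
        _ = (((u j : Matrix (Fin dB) (Fin dE) ℂ)ᴴ * (u i : Matrix (Fin dB) (Fin dE) ℂ)) * f).trace := by
            rw [Matrix.mul_assoc]
        _ = (f * ((u j : Matrix (Fin dB) (Fin dE) ℂ)ᴴ * (u i : Matrix (Fin dB) (Fin dE) ℂ))).trace :=
            Matrix.trace_mul_comm _ _
        _ = ((u j : Matrix (Fin dB) (Fin dE) ℂ)ᴴ * (u i : Matrix (Fin dB) (Fin dE) ℂ)).trace :=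
            key (u j) (u i)
        _ = if j = i then (1 : ℂ) else 0 := honb j i
    rw [htrace T, hNfS T]
    rw [Matrix.trace_sum]
    rw [Finset.sum_congr rfl fun i (_ : i ∈ Finset.univ) => Matrix.trace_sum _ _]
    simp only [Matrix.trace_smul, smul_eq_mul, hterm, mul_ite, mul_one, mul_zero]
    refine Finset.sum_congr rfl fun i _ => ?_
    simp


end TROPaper
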